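/- For n ≥ 3, the difference W_n(x) − |x|²/2 converges to a finite negative constant c(n) as |x| → ∞, with error O(|x|^{2−n}); more precisely there are constants c(n) < 0 and C > 0 such that |W_n(x) − |x|²/2 − c(n)| ≤ C|x|^{2−n} for all |x| ≥ 2. -/

import Mathlib

/-!
The integrand `f(s) = (max (sⁿ - 1) 0)^{1/n}` vanishes on `[0, 1]`, and on `[1, ∞)` the defect
`s - f(s)` lies between `0` and `s^{1-n}`, because
`(s - s^{1-n})ⁿ = sⁿ (1 - s⁻ⁿ)ⁿ ≤ sⁿ (1 - s⁻ⁿ) = sⁿ - 1`.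
For `n ≥ 3` the defect is therefore integrable on `(1, ∞)`, and `∫₀^R f = R²/2 - 1/2 - ∫₁^R (s - f)`
shows that `W_n(x) - |x|²/2` tends to `c = -1/2 - ∫₁^∞ (s - f) < 0`, with error
`∫_{|x|}^∞ (s - f) ≤ ∫_{|x|}^∞ s^{1-n} = |x|^{2-n}/(n-2)`.
-/

open MeasureTheory Set Real

noncomputable def profile (n : ℕ) (s : ℝ) : ℝ := (max (s ^ n - 1) 0) ^ ((1 : ℝ) / n)

noncomputable def profileDefect (n : ℕ) (s : ℝ) : ℝ := s - profile n s

section Profile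

variable {n : ℕ} {s : ℝ}

lemma continuous_profile (n : ℕ) : Continuous (profile n) :=
  (by fun_prop : Continuous fun s : ℝ ↦ max (s ^ n - 1) 0).rpow_const
    fun _ ↦ Or.inr (by positivity)

lemma continuous_profileDefect (n : ℕ) : Continuous (profileDefect n) :=
  continuous_id.sub (continuous_profile n)

lemma profile_eq_zero (hn : n ≠ 0) (hs₀ : 0 ≤ s) (hs₁ : s ≤ 1) : profile n s = 0 := by
  have hmax : max (s ^ n - 1) 0 = 0 :=
    max_eq_right (by linarith [pow_le_one₀ hs₀ hs₁ (n := n)])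
  rw [profile, hmax, zero_rpow (by positivity)]

lemma profile_le_self (hn : n ≠ 0) (hs : 0 ≤ s) : profile n s ≤ s := by
  rw [profile, one_div, rpow_inv_le_iff_of_pos (le_max_right _ _) hs (by positivity), rpow_natCast]
  exact max_le (by linarith) (by positivity)

lemma sub_rpow_one_sub_le_profile (hn : n ≠ 0) (hs : 1 ≤ s) :
    s - s ^ (1 - (n : ℝ)) ≤ profile n s := by
  have hs₀ : 0 < s := by linarith
  have hsn : 1 ≤ s ^ n := one_le_pow₀ hs
  set t := 1 - (s ^ n)⁻¹ with ht
  have ht₀ : 0 ≤ t := sub_nonneg.2 (inv_le_one_of_one_le₀ hsn)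
  have ht₁ : t ≤ 1 := sub_le_self _ (by positivity)
  have hlhs : s - s ^ (1 - (n : ℝ)) = s * t := by
    rw [rpow_sub hs₀, rpow_one, rpow_natCast, ht]
    ring
  have hpow : (s * t) ^ n ≤ s ^ n - 1 :=
    calc (s * t) ^ n = s ^ n * t ^ n := mul_pow s t n
      _ ≤ s ^ n * t := by gcongr; exact pow_le_of_le_one ht₀ ht₁ hn
      _ = s ^ n - 1 := by rw [ht, mul_sub, mul_one, mul_inv_cancel₀ (by positivity)]
  rw [hlhs, profile, one_div, le_rpow_inv_iff_of_pos (by positivity) (le_max_right _ _)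
    (by positivity), rpow_natCast]
  exact hpow.trans (le_max_left _ _)

lemma profileDefect_nonneg (hn : n ≠ 0) (hs : 0 ≤ s) : 0 ≤ profileDefect n s :=
  sub_nonneg.2 (profile_le_self hn hs)

lemma profileDefect_le (hn : n ≠ 0) (hs : 1 ≤ s) :
    profileDefect n s ≤ s ^ (1 - (n : ℝ)) := by
  have := sub_rpow_one_sub_le_profile hn hs
  rw [profileDefect]
  linarith

lemma integral_profile (hn : n ≠ 0) (R : ℝ) :
    ∫ s in (0 : ℝ)..R, profile n s
      = R ^ 2 / 2 - 1 / 2 - ∫ s in (1 : ℝ)..R, profileDefect n s := by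
  have hint : ∀ a b : ℝ, IntervalIntegrable (profile n) volume a b :=
    fun _ _ ↦ (continuous_profile n).intervalIntegrable _ _
  have hzero : ∫ s in (0 : ℝ)..1, profile n s = 0 :=
    intervalIntegral.integral_zero_ae <| Filter.Eventually.of_forall fun s hs ↦ by
      rw [uIoc_of_le zero_le_one] at hs
      exact profile_eq_zero hn hs.1.le hs.2
  have hdefect : ∫ s in (1 : ℝ)..R, profileDefect n s
      = (∫ s in (1 : ℝ)..R, s) - ∫ s in (1 : ℝ)..R, profile n s :=
    intervalIntegral.integral_sub intervalIntegral.intervalIntegrable_id (hint 1 R)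
  rw [← intervalIntegral.integral_add_adjacent_intervals (hint 0 1) (hint 1 R), hzero, hdefect,
    integral_id]
  ring

end Profile

section Tail

variable {n : ℕ}

lemma integrableOn_profileDefect_Ioi (hn : 2 < n) {R : ℝ} (hR : 1 ≤ R) :
    IntegrableOn (profileDefect n) (Ioi R) := by
  have hn' : (2 : ℝ) < n := by exact_mod_cast hn
  have hpow : IntegrableOn (fun s : ℝ ↦ s ^ (1 - (n : ℝ))) (Ioi R) :=
    integrableOn_Ioi_rpow_of_lt (by linarith) (by linarith)
  refine hpow.mono' (continuous_profileDefect n).aestronglyMeasurable.restrict ?_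
  filter_upwards [ae_restrict_mem measurableSet_Ioi] with s hs
  have hs₁ : 1 ≤ s := hR.trans (le_of_lt hs)
  rw [norm_of_nonneg (profileDefect_nonneg (by omega) (by linarith))]
  exact profileDefect_le (by omega) hs₁

lemma setIntegral_profileDefect_Ioi_nonneg (hn : n ≠ 0) {R : ℝ} (hR : 0 ≤ R) :
    0 ≤ ∫ s in Ioi R, profileDefect n s :=
  setIntegral_nonneg measurableSet_Ioi fun _ hs ↦ profileDefect_nonneg hn (hR.trans (le_of_lt hs))

lemma setIntegral_profileDefect_Ioi_le (hn : 2 < n) {R : ℝ} (hR : 1 ≤ R) :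
    ∫ s in Ioi R, profileDefect n s ≤ R ^ (2 - (n : ℝ)) / (n - 2) := by
  have hn' : (2 : ℝ) < n := by exact_mod_cast hn
  have hexp : 1 - (n : ℝ) < -1 := by linarith
  calc ∫ s in Ioi R, profileDefect n s ≤ ∫ s in Ioi R, s ^ (1 - (n : ℝ)) :=
        setIntegral_mono_on (integrableOn_profileDefect_Ioi hn hR)
          (integrableOn_Ioi_rpow_of_lt hexp (by linarith)) measurableSet_Ioi
          fun s hs ↦ profileDefect_le (by omega) (hR.trans (le_of_lt hs))
    _ = R ^ (2 - (n : ℝ)) / (n - 2) := by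
        rw [integral_Ioi_rpow_of_lt hexp (by linarith), neg_div, ← div_neg]
        ring_nf

noncomputable def asymptoticConst (n : ℕ) : ℝ := -(1 / 2) - ∫ s in Ioi 1, profileDefect n s

lemma asymptoticConst_neg (hn : n ≠ 0) : asymptoticConst n < 0 := by
  have := setIntegral_profileDefect_Ioi_nonneg hn zero_le_one
  rw [asymptoticConst]
  linarith

lemma integral_profile_sub_eq_setIntegral_Ioi (hn : 2 < n) {R : ℝ} (hR : 1 ≤ R) :
    (∫ s in (0 : ℝ)..R, profile n s) - R ^ 2 / 2 - asymptoticConst n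
      = ∫ s in Ioi R, profileDefect n s := by
  rw [asymptoticConst, integral_profile (by omega) R, ← intervalIntegral.integral_interval_add_Ioi
    (integrableOn_profileDefect_Ioi hn le_rfl) (integrableOn_profileDefect_Ioi hn hR)]
  ring

end Tail

theorem stmt_1 (n : ℕ) (hn : 3 ≤ n)
    (W : EuclideanSpace ℝ (Fin n) → ℝ)
    (hW : ∀ x, W x = ∫ s in (0:ℝ)..‖x‖, (max (s ^ n - 1) 0) ^ ((1:ℝ)/n)) :
    ∃ c < (0:ℝ), ∃ C > (0:ℝ), ∀ x : EuclideanSpace ℝ (Fin n), 2 ≤ ‖x‖ →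
      |W x - ‖x‖ ^ 2 / 2 - c| ≤ C * ‖x‖ ^ ((2:ℝ) - n) := by
  have hn2 : 2 < n := by omega
  have hn2' : (2 : ℝ) < n := by exact_mod_cast hn2
  refine ⟨asymptoticConst n, asymptoticConst_neg (by omega), 1 / (n - 2),
    one_div_pos.2 (by linarith), fun x hx ↦ ?_⟩
  have hR : 1 ≤ ‖x‖ := by linarith
  have hWx : W x = ∫ s in (0 : ℝ)..‖x‖, profile n s := hW x
  rw [hWx, integral_profile_sub_eq_setIntegral_Ioi hn2 hR,
    abs_of_nonneg (setIntegral_profileDefect_Ioi_nonneg (by omega) (by linarith)),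
    one_div_mul_eq_div]
  exact setIntegral_profileDefect_Ioi_le hn2 hR
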